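/- Let m, n be positive integers with 3 | m·n. Then N_T(m,n) ≤ 2^{4mn/3} · min(N_D(m,2n), N_D(2m,n)), where N_T(m,n) is the number of tromino tilings of R(m,n) and N_D(p,q) is the number of domino tilings of R(p,q). -/

import Mathlib

abbrev Cell : Type := ℤ × ℤ

/-- The m×n rectangle of cells (i,j), 1 ≤ i ≤ m (row), 1 ≤ j ≤ n (column). -/
def rect (m n : ℤ) : Set Cell :=
  {c : Cell | 1 ≤ c.1 ∧ c.1 ≤ m ∧ 1 ≤ c.2 ∧ c.2 ≤ n}

/-- An L-tromino: a 2×2 block minus one of its cells. -/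
def IsTromino (T : Set Cell) : Prop :=
  ∃ i j : ℤ, ∃ c : Cell,
    c ∈ ({(i, j), (i + 1, j), (i, j + 1), (i + 1, j + 1)} : Set Cell) ∧
    T = ({(i, j), (i + 1, j), (i, j + 1), (i + 1, j + 1)} : Set Cell) \ {c}

def IsHDomino (D : Set Cell) : Prop := ∃ i j : ℤ, D = {(i, j), (i, j + 1)}

def IsVDomino (D : Set Cell) : Prop := ∃ i j : ℤ, D = {(i, j), (i + 1, j)}

def IsDomino (D : Set Cell) : Prop := IsHDomino D ∨ IsVDomino D

/-- A partition of `S` into L-trominoes, identified with its set of pieces. -/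
def IsTromTiling (P : Set (Set Cell)) (S : Set Cell) : Prop :=
  (∀ p ∈ P, IsTromino p) ∧ P.PairwiseDisjoint id ∧ ⋃₀ P = S

def Tileable (S : Set Cell) : Prop := ∃ P, IsTromTiling P S

/-- A partition of `S` into dominoes, identified with its set of pieces. -/
def IsDominoTiling (P : Set (Set Cell)) (S : Set Cell) : Prop :=
  (∀ p ∈ P, IsDomino p) ∧ P.PairwiseDisjoint id ∧ ⋃₀ P = S

/-- A partition of `S` into `k` L-trominoes and exactly one piece satisfying `dom`. -/
def IsMixedTiling (P : Set (Set Cell)) (S : Set Cell)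
    (dom : Set Cell → Prop) (k : ℕ) : Prop :=
  P.PairwiseDisjoint id ∧ ⋃₀ P = S ∧
  (∀ p ∈ P, IsTromino p ∨ dom p) ∧
  {p ∈ P | dom p}.ncard = 1 ∧ {p ∈ P | IsTromino p}.ncard = k

/-!
Scan a finite region in lexicographic order. Its first cell is the smallest cell of the tromino
covering it, and only four L-trominoes have a given smallest cell; removing that tromino leaves a
tiling of a region with three cells fewer. So a region of `N` cells has at most `4 ^ (N / 3)`
tromino tilings, and `4 ^ (N / 3) ≤ 2 ^ (4 * N / 3)`. Both rectangles `R(m, 2n)` and `R(2m, n)`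
have a domino tiling by parallel dominoes, so the minimum is at least `1`.
-/

/-- The four L-trominoes whose lexicographically smallest cell is `a`. -/
def lTromino (a : Cell) : Fin 4 → Set Cell
  | 0 => {a, (a.1 + 1, a.2 - 1), (a.1 + 1, a.2)}
  | 1 => {a, (a.1 + 1, a.2), (a.1 + 1, a.2 + 1)}
  | 2 => {a, (a.1, a.2 + 1), (a.1 + 1, a.2 + 1)}
  | 3 => {a, (a.1, a.2 + 1), (a.1 + 1, a.2)}

theorem ncard_lTromino (a : Cell) (s : Fin 4) : (lTromino a s).ncard = 3 := by
  obtain ⟨a1, a2⟩ := a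
  fin_cases s <;> simp only [lTromino] <;> rw [Set.ncard_eq_three] <;>
    exact ⟨_, _, _, by simp, by simp, by simp, rfl⟩

theorem IsTromino.eq_lTromino {T : Set Cell} {a : Cell} (hT : IsTromino T) (ha : a ∈ T)
    (hmin : ∀ c ∈ T, toLex a ≤ toLex c) : ∃ s, T = lTromino a s := by
  obtain ⟨i, j, c, hc, rfl⟩ := hT
  obtain ⟨a1, a2⟩ := a
  have hle : ∀ d ∈ ({(i, j), (i + 1, j), (i, j + 1), (i + 1, j + 1)} : Set Cell), d ≠ c →
      a1 < d.1 ∨ a1 = d.1 ∧ a2 ≤ d.2 := fun d hd hdc => by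
    simpa [Prod.Lex.toLex_le_toLex] using hmin d ⟨hd, hdc⟩
  have h₀₀ := hle (i, j) (by simp)
  have h₀₁ := hle (i, j + 1) (by simp)
  simp only [Set.mem_insert_iff, Set.mem_singleton_iff] at hc
  rcases hc with rfl | rfl | rfl | rfl <;> simp [Prod.ext_iff] at ha h₀₀ h₀₁
  · exact ⟨0, by ext ⟨x, y⟩; simp [lTromino, Prod.ext_iff]; omega⟩
  · exact ⟨2, by ext ⟨x, y⟩; simp [lTromino, Prod.ext_iff]; omega⟩
  · exact ⟨1, by ext ⟨x, y⟩; simp [lTromino, Prod.ext_iff]; omega⟩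
  · exact ⟨3, by ext ⟨x, y⟩; simp [lTromino, Prod.ext_iff]; omega⟩

theorem IsTromino.nonempty {T : Set Cell} (hT : IsTromino T) : T.Nonempty := by
  obtain ⟨i, j, c, -, rfl⟩ := hT
  by_cases h : c = (i, j)
  · exact ⟨(i + 1, j), by simp [h]⟩
  · exact ⟨(i, j), by simp [Ne.symm h]⟩

theorem Set.Finite.setOf_sUnion_eq {α : Type*} {S : Set α} (hS : S.Finite) :
    {P : Set (Set α) | ⋃₀ P = S}.Finite :=
  hS.finite_subsets.finite_subsets.subset fun _ hP _ hT => hP ▸ Set.subset_sUnion_of_mem hT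

theorem IsTromTiling.subset {P : Set (Set Cell)} {S T : Set Cell} (hP : IsTromTiling P S)
    (hT : T ∈ P) : T ⊆ S :=
  hP.2.2 ▸ Set.subset_sUnion_of_mem hT

theorem IsTromTiling.sdiff_singleton {P : Set (Set Cell)} {S T : Set Cell}
    (hP : IsTromTiling P S) (hT : T ∈ P) : IsTromTiling (P \ {T}) (S \ T) := by
  refine ⟨fun p hp => hP.1 p hp.1, hP.2.1.subset Set.sdiff_subset, ?_⟩
  rw [← hP.2.2]
  ext x
  simp only [Set.mem_sUnion, Set.mem_sdiff, Set.mem_singleton_iff]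
  constructor
  · rintro ⟨U, ⟨hUP, hUT⟩, hxU⟩
    exact ⟨⟨U, hUP, hxU⟩, Set.disjoint_left.1 (hP.2.1 hUP hT hUT) hxU⟩
  · rintro ⟨⟨U, hUP, hxU⟩, hxT⟩
    exact ⟨U, ⟨hUP, by rintro rfl; exact hxT hxU⟩, hxU⟩

theorem IsTromTiling.exists_lTromino_mem {P : Set (Set Cell)} {S : Set Cell}
    (hP : IsTromTiling P S) {a : Cell} (ha : a ∈ S) (hmin : ∀ c ∈ S, toLex a ≤ toLex c) :
    ∃ s, lTromino a s ∈ P := by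
  rw [← hP.2.2] at ha
  obtain ⟨T, hTP, haT⟩ := ha
  obtain ⟨s, rfl⟩ := (hP.1 T hTP).eq_lTromino haT fun c hc => hmin c (hP.subset hTP hc)
  exact ⟨s, hTP⟩

theorem setOf_isTromTiling_eq_biUnion {S : Set Cell} {a : Cell} (ha : a ∈ S)
    (hmin : ∀ c ∈ S, toLex a ≤ toLex c) :
    {P | IsTromTiling P S} =
      ⋃ s ∈ Finset.univ, {P | IsTromTiling P S ∧ lTromino a s ∈ P} := by
  ext P
  simp only [Set.mem_ofPred_eq, Finset.mem_univ, Set.iUnion_true, Set.mem_iUnion]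
  exact ⟨fun hP => (hP.exists_lTromino_mem ha hmin).imp fun _ h => ⟨hP, h⟩,
    fun ⟨_, hP, _⟩ => hP⟩

theorem ncard_setOf_isTromTiling_empty_le : {P | IsTromTiling P ∅}.ncard ≤ 1 := by
  refine (Set.ncard_le_ncard (t := {∅}) ?_).trans (Set.ncard_singleton _).le
  intro P hP
  refine Set.eq_empty_of_forall_notMem fun T hT => ?_
  obtain ⟨c, hc⟩ := (hP.1 T hT).nonempty
  exact hP.subset hT hc

theorem ncard_setOf_isTromTiling_mem_le {S T : Set Cell} (hS : S.Finite) :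
    {P | IsTromTiling P S ∧ T ∈ P}.ncard ≤ {Q | IsTromTiling Q (S \ T)}.ncard := by
  refine Set.ncard_le_ncard_of_injOn (· \ {T}) (fun P hP => hP.1.sdiff_singleton hP.2) ?_
    (hS.sdiff.setOf_sUnion_eq.subset fun Q hQ => hQ.2.2)
  intro P hP Q hQ hPQ
  rw [← Set.insert_sdiff_self_of_mem hP.2, ← Set.insert_sdiff_self_of_mem hQ.2]
  exact congrArg (insert T) hPQ

theorem ncard_setOf_isTromTiling_le {S : Set Cell} (hS : S.Finite) :
    {P | IsTromTiling P S}.ncard ≤ 4 ^ (S.ncard / 3) := by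
  induction hN : S.ncard using Nat.strong_induction_on generalizing S with
  | _ N ih =>
  rcases S.eq_empty_or_nonempty with rfl | hne
  · exact ncard_setOf_isTromTiling_empty_le.trans (Nat.one_le_pow _ _ (by norm_num))
  obtain ⟨a, haS, hmin⟩ := S.exists_min_image toLex hS hne
  have hfiber : ∀ s, 4 * {P | IsTromTiling P S ∧ lTromino a s ∈ P}.ncard ≤ 4 ^ (N / 3) := by
    intro s
    obtain h | ⟨P, hP, hsP⟩ :=
      Set.eq_empty_or_nonempty {P | IsTromTiling P S ∧ lTromino a s ∈ P}
    · simp [h]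
    have hdiff : (S \ lTromino a s).ncard + 3 = N := by
      rw [← ncard_lTromino a s, ← hN]
      exact Set.ncard_sdiff_add_ncard_of_subset (hP.subset hsP) hS
    calc 4 * {P | IsTromTiling P S ∧ lTromino a s ∈ P}.ncard
        ≤ 4 * 4 ^ ((S \ lTromino a s).ncard / 3) :=
          Nat.mul_le_mul_left 4 ((ncard_setOf_isTromTiling_mem_le hS).trans
            (ih _ (by omega) hS.sdiff rfl))
      _ = 4 ^ (N / 3) := by rw [← pow_succ', ← hdiff, Nat.add_div_right _ (by norm_num)]
  have h4 : 4 * {P | IsTromTiling P S}.ncard ≤ 4 * 4 ^ (N / 3) := calc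
    4 * {P | IsTromTiling P S}.ncard
        ≤ ∑ s : Fin 4, 4 * {P | IsTromTiling P S ∧ lTromino a s ∈ P}.ncard := by
          rw [setOf_isTromTiling_eq_biUnion haS hmin, ← Finset.mul_sum]
          exact Nat.mul_le_mul_left 4 (Finset.univ.set_ncard_biUnion_le _)
    _ ≤ ∑ _s : Fin 4, 4 ^ (N / 3) := Finset.sum_le_sum fun s _ => hfiber s
    _ = 4 * 4 ^ (N / 3) := by simp
  exact Nat.le_of_mul_le_mul_left h4 (by norm_num)

theorem rect_eq_coe_finset (m n : ℤ) : rect m n = ↑(Finset.Icc 1 m ×ˢ Finset.Icc 1 n) := by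
  ext ⟨i, j⟩
  simp only [rect, Set.mem_ofPred_eq, Finset.coe_product, Set.mem_prod, Finset.mem_coe,
    Finset.mem_Icc]
  tauto

theorem rect_finite (m n : ℤ) : (rect m n).Finite := by
  rw [rect_eq_coe_finset]
  exact Finset.finite_toSet _

theorem ncard_rect (m n : ℕ) : (rect m n).ncard = m * n := by
  rw [rect_eq_coe_finset, Set.ncard_coe_finset, Finset.card_product, Int.card_Icc, Int.card_Icc]
  simp

theorem IsDominoTiling.image_swap {P : Set (Set Cell)} {S : Set Cell}
    (hP : IsDominoTiling P S) :
    IsDominoTiling (Set.image Prod.swap '' P) (Prod.swap '' S) := by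
  refine ⟨?_, ?_, by rw [← hP.2.2, Set.image_sUnion]⟩
  · rintro _ ⟨D, hD, rfl⟩
    rcases hP.1 D hD with ⟨i, j, rfl⟩ | ⟨i, j, rfl⟩
    · exact Or.inr ⟨j, i, by simp [Set.image_insert_eq]⟩
    · exact Or.inl ⟨j, i, by simp [Set.image_insert_eq]⟩
  · rw [(Set.image_injective.2 Prod.swap_injective).injOn.pairwiseDisjoint_image]
    exact fun D hD E hE hDE => (Set.disjoint_image_iff Prod.swap_injective).2 (hP.2.1 hD hE hDE)

theorem image_swap_rect (m n : ℤ) : Prod.swap '' rect m n = rect n m := by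
  ext ⟨x, y⟩
  simp only [Set.image_swap_eq_preimage_swap, rect, Set.mem_preimage, Prod.swap_prod_mk,
    Set.mem_ofPred_eq]
  tauto

theorem exists_isDominoTiling_rect_two_mul_right (m n : ℤ) :
    ∃ P, IsDominoTiling P (rect m (2 * n)) := by
  refine ⟨{D | ∃ i j : ℤ, 1 ≤ i ∧ i ≤ m ∧ 1 ≤ j ∧ j ≤ n ∧ D = {(i, 2 * j - 1), (i, 2 * j)}},
    ?_, ?_, ?_⟩
  · rintro p ⟨i, j, -, -, -, -, rfl⟩
    exact Or.inl ⟨i, 2 * j - 1, by rw [sub_add_cancel]⟩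
  · rintro D ⟨i, j, -, -, -, -, rfl⟩ D' ⟨i', j', -, -, -, -, rfl⟩ hne
    rw [Function.onFun, Set.disjoint_left]
    rintro ⟨x, y⟩ hx hx'
    simp only [id, Set.mem_insert_iff, Set.mem_singleton_iff, Prod.mk.injEq] at hx hx'
    obtain ⟨rfl, rfl⟩ : i = i' ∧ j = j' := by omega
    exact hne rfl
  · ext ⟨x, y⟩
    simp only [Set.mem_sUnion, Set.mem_ofPred_eq, rect]
    constructor
    · rintro ⟨D, ⟨i, j, h1, h2, h3, h4, rfl⟩, hx⟩
      simp only [Set.mem_insert_iff, Set.mem_singleton_iff, Prod.mk.injEq] at hx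
      omega
    · rintro ⟨hx1, hx2, hy1, hy2⟩
      refine ⟨_, ⟨x, (y + 1) / 2, by omega, by omega, by omega, by omega, rfl⟩, ?_⟩
      simp only [Set.mem_insert_iff, Set.mem_singleton_iff, Prod.mk.injEq, true_and]
      omega

theorem exists_isDominoTiling_rect_two_mul_left (m n : ℤ) :
    ∃ P, IsDominoTiling P (rect (2 * m) n) := by
  obtain ⟨P, hP⟩ := exists_isDominoTiling_rect_two_mul_right n m
  exact ⟨_, image_swap_rect n (2 * m) ▸ hP.image_swap⟩

theorem one_le_card_isDominoTiling {S : Set Cell} (hS : S.Finite)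
    (hne : ∃ P, IsDominoTiling P S) : 1 ≤ Nat.card {P // IsDominoTiling P S} :=
  have : Finite {P // IsDominoTiling P S} :=
    (hS.setOf_sUnion_eq.subset fun _ hP => hP.2.2).to_subtype
  Nat.card_pos_iff.2 ⟨nonempty_subtype.2 hne, this⟩

theorem tromino_tilings_upper_bound_general (m n : ℕ) :
    Nat.card {P : Set (Set Cell) // IsTromTiling P (rect (m : ℤ) (n : ℤ))} ≤
      2 ^ (4 * m * n / 3) *
        min (Nat.card {P : Set (Set Cell) // IsDominoTiling P (rect (m : ℤ) (2 * n : ℤ))})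
            (Nat.card {P : Set (Set Cell) // IsDominoTiling P (rect (2 * m : ℤ) (n : ℤ))}) := by
  have hdom : 1 ≤ min (Nat.card {P // IsDominoTiling P (rect (m : ℤ) (2 * n : ℤ))})
      (Nat.card {P // IsDominoTiling P (rect (2 * m : ℤ) (n : ℤ))}) :=
    le_min
      (one_le_card_isDominoTiling (rect_finite _ _) (exists_isDominoTiling_rect_two_mul_right _ _))
      (one_le_card_isDominoTiling (rect_finite _ _) (exists_isDominoTiling_rect_two_mul_left _ _))
  calc Nat.card {P // IsTromTiling P (rect (m : ℤ) (n : ℤ))}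
      ≤ 4 ^ (m * n / 3) := ncard_rect m n ▸ ncard_setOf_isTromTiling_le (rect_finite _ _)
    _ = 2 ^ (2 * (m * n / 3)) := by rw [pow_mul]; norm_num
    _ ≤ 2 ^ (4 * m * n / 3) := Nat.pow_le_pow_right (by norm_num) (by rw [mul_assoc]; omega)
    _ ≤ _ := Nat.le_mul_of_pos_right _ hdom

/-- Upper bound on the number of tromino tilings via domino tilings. -/
theorem tromino_tilings_upper_bound (m n : ℕ) (hm : 0 < m) (hn : 0 < n)
    (hdvd : 3 ∣ m * n) :
    Nat.card {P : Set (Set Cell) // IsTromTiling P (rect (m : ℤ) (n : ℤ))} ≤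
      2 ^ (4 * m * n / 3) *
        min (Nat.card {P : Set (Set Cell) // IsDominoTiling P (rect (m : ℤ) (2 * n : ℤ))})
            (Nat.card {P : Set (Set Cell) // IsDominoTiling P (rect (2 * m : ℤ) (n : ℤ))}) :=
  tromino_tilings_upper_bound_general m n
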